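/- Let Γ = (C, A, Δ) be a normed BPA system and R ⊆ C_G. If γ ≃_R δ and α ≃ β (branching bisimilar), then αγ ≃_R βδ. In particular, γ ≃_R δ implies αγ ≃_R αδ for every process α. -/

import Mathlib

open Relation

/-- A BPA system over constants `C` and actions `A`: a distinguished silent
action `tau`, and a finite set of transition rules `X —ℓ→ α`, where `C` and
`A` are finite. -/
structure BPA (C A : Type) where
  tau : A
  rules : Set (C × A × List C)
  finC : Finite C
  finA : Finite A
  finRules : rules.Finite

namespace BPA

variable {C A : Type}

/-- One-step labelled transition between processes.  Processes are strings
over `C` (lists, with the leftmost constant acting first). -/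
def Step (Γ : BPA C A) (ℓ : A) (p q : List C) : Prop :=
  ∃ X γ β, (X, ℓ, γ) ∈ Γ.rules ∧ p = X :: β ∧ q = γ ++ β

/-- A transition carrying an arbitrary label. -/
def AnyStep (Γ : BPA C A) (p q : List C) : Prop := ∃ ℓ, Γ.Step ℓ p q

/-- `⟹` : the reflexive transitive closure of silent steps. -/
def TauStar (Γ : BPA C A) : List C → List C → Prop := ReflTransGen (Γ.Step Γ.tau)

/-- A process is normed if it can reach the empty process `ε`. -/
def NormedProc (Γ : BPA C A) (p : List C) : Prop := ReflTransGen Γ.AnyStep p []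

/-- The BPA system is normed. -/
def Normed (Γ : BPA C A) : Prop := ∀ X : C, Γ.NormedProc [X]

/-- A chain of `s`-steps starting at `start` in which every visited state is
related by `r` to the process `anchor`. -/
def RelChain (s : List C → List C → Prop) (r : List C → List C → Prop)
    (anchor : List C) : List C → List C → Prop :=
  ReflTransGen fun x y => s x y ∧ r anchor y

/-- Branching bisimulation (an equivalence relation by convention). -/
def IsBranchingBisim (Γ : BPA C A) (r : List C → List C → Prop) : Prop :=
  Equivalence r ∧ ∀ α β, r α β →
    ((∀ a, a ≠ Γ.tau → ∀ α', Γ.Step a α α' →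
        ∃ β'' β', RelChain (Γ.Step Γ.tau) r β β β'' ∧ Γ.Step a β'' β' ∧ r α' β') ∧
     (∀ α', Γ.Step Γ.tau α α' → ¬ r α α' →
        ∃ β'' β', RelChain (Γ.Step Γ.tau) r β β β'' ∧ Γ.Step Γ.tau β'' β' ∧
          ¬ r β'' β' ∧ r α' β'))

/-- Branching bisimilarity `≃` : the largest branching bisimulation. -/
def Bisim (Γ : BPA C A) (α β : List C) : Prop :=
  ∃ r, Γ.IsBranchingBisim r ∧ r α β

/-- A ground process: it can silently reach `ε`. -/
def Ground (Γ : BPA C A) (p : List C) : Prop := Γ.TauStar p []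

/-- The set `C_G` of ground constants. -/
def GroundC (Γ : BPA C A) : Set C := {X | Γ.Ground [X]}

/-- `R`-equality `=_R`: the two processes differ only in suffixes over `R`. -/
def REq (R : Set C) (α β : List C) : Prop :=
  ∃ ζ a b, α = ζ ++ a ∧ β = ζ ++ b ∧ (∀ X ∈ a, X ∈ R) ∧ (∀ X ∈ b, X ∈ R)

open Classical in
/-- The `R`-normal form `α_R` of a process: delete the maximal suffix over `R`. -/
noncomputable def nf (R : Set C) (α : List C) : List C :=
  (α.reverse.dropWhile fun X => decide (X ∈ R)).reverse

/-- A process is in `R`-normal form. -/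
def InNF (R : Set C) (α : List C) : Prop := nf R α = α

/-- The `R`-transition relation `—ℓ→_R` between `R`-normal forms. -/
def StepR (Γ : BPA C A) (R : Set C) (ℓ : A) (ζ η : List C) : Prop :=
  ∃ α β, ζ = nf R α ∧ η = nf R β ∧ Γ.Step ℓ α β

/-- `⟹_R`. -/
def TauStarR (Γ : BPA C A) (R : Set C) : List C → List C → Prop :=
  ReflTransGen (Γ.StepR R Γ.tau)

/-- `R`-bisimulation: an equivalence relation containing `=_R` satisfying
ground preservation and the relativized branching transfer conditions. -/
def IsRBisim (Γ : BPA C A) (R : Set C) (r : List C → List C → Prop) : Prop :=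
  Equivalence r ∧ (∀ α β, REq R α β → r α β) ∧
  ∀ α β, r α β →
    ((Γ.TauStar α [] → Γ.TauStar β []) ∧
     (∀ α', Γ.Step Γ.tau α α' → ¬ r α α' →
        ∃ β'' β', RelChain (Γ.StepR R Γ.tau) r β (nf R β) β'' ∧
          Γ.StepR R Γ.tau β'' β' ∧ ¬ r β'' β' ∧ r α' β') ∧
     (∀ a, a ≠ Γ.tau → ∀ α', Γ.Step a α α' →
        ∃ β'' β', RelChain (Γ.StepR R Γ.tau) r β (nf R β) β'' ∧
          Γ.StepR R a β'' β' ∧ r α' β'))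

/-- `R`-bisimilarity `≃_R` : the largest `R`-bisimulation. -/
def RBisim (Γ : BPA C A) (R : Set C) (α β : List C) : Prop :=
  ∃ r, Γ.IsRBisim R r ∧ r α β

/-- `Id_R = {X ∈ C : X ≃_R ε}`. -/
def IdR (Γ : BPA C A) (R : Set C) : Set C := {X | Γ.RBisim R [X] []}

/-- `Rd_R(γ) = {X ∈ C : Xγ ≃_R γ}`. -/
def RdR (Γ : BPA C A) (R : Set C) (γ : List C) : Set C :=
  {X | Γ.RBisim R (X :: γ) γ}

/-- An admissible reference set: `R = Id_R`. -/
def Admissible (Γ : BPA C A) (R : Set C) : Prop := R = Γ.IdR R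

end BPA

/-!
Read up to `R`-normal forms, the pairs `(p u, q v)` with `p ≃ q` and `u ≃_R v` satisfy the
transfer conditions of an `R`-bisimulation in a relaxed form (`IsSemiRBisim`). A step of `p u`
is either a step of the head of `p`, answered by the branching bisimulation in front of `v`, or,
when `p` terminates silently and vanishes in the normal form, a step of `u`; then `q v` lets `q`
run down silently (this is where normedness enters) and `v` answers. The union of all relaxed
`R`-bisimulations is closed under composition, hence an equivalence, and by the stuttering
property the silent paths it uses stay inside it, so it is a genuine `R`-bisimulation.
-/

namespace BPA

open Relation

variable {C A : Type} {Γ : BPA C A} {R : Set C}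

section NormalForm

variable (R)

theorem nf_append_of_forall_mem {ρ : List C} (hρ : ∀ X ∈ ρ, X ∈ R) (z : List C) :
    nf R (z ++ ρ) = nf R z := by
  rw [nf, List.reverse_append, List.dropWhile_append_of_pos (by simpa using hρ), nf]

theorem exists_eq_nf_append (α : List C) :
    ∃ ρ, (∀ X ∈ ρ, X ∈ R) ∧ α = nf R α ++ ρ := by
  classical
  refine ⟨α.rtakeWhile fun X => decide (X ∈ R), fun X hX => ?_, ?_⟩
  · simpa using List.mem_rtakeWhile_imp hX
  · exact (List.rdropWhile_append_rtakeWhile ..).symm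

@[simp]
theorem nf_nf (α : List C) : nf R (nf R α) = nf R α :=
  List.rdropWhile_idempotent ..

theorem nf_eq_nil_iff {α : List C} : nf R α = [] ↔ ∀ X ∈ α, X ∈ R := by
  simp [nf, List.dropWhile_eq_nil_iff]

theorem REq_iff_nf_eq {α β : List C} : REq R α β ↔ nf R α = nf R β := by
  constructor
  · rintro ⟨ζ, a, b, rfl, rfl, ha, hb⟩
    rw [nf_append_of_forall_mem R ha, nf_append_of_forall_mem R hb]
  · intro h
    obtain ⟨ρ, hρ, hα⟩ := exists_eq_nf_append R α
    obtain ⟨σ, hσ, hβ⟩ := exists_eq_nf_append R β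
    exact ⟨nf R α, ρ, σ, hα, h ▸ hβ, hρ, hσ⟩

end NormalForm

theorem Step.append_right {ℓ : A} {u v : List C} (h : Γ.Step ℓ u v) (w : List C) :
    Γ.Step ℓ (u ++ w) (v ++ w) := by
  obtain ⟨X, κ, β, hr, rfl, rfl⟩ := h
  exact ⟨X, κ, β ++ w, hr, by simp, by simp⟩

theorem not_step_nil {ℓ : A} {v : List C} : ¬ Γ.Step ℓ [] v := by
  rintro ⟨X, κ, β, -, ⟨⟩, -⟩

/-- Only the head constant of a process acts, and a nonempty normal form `nf R (X :: z)` pins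
that head to `X`. -/
theorem Step.exists_rule_of_nf_eq {ℓ : A} {x x' z : List C} {X : C} (h : Γ.Step ℓ x x')
    (hx : nf R x = nf R (X :: z)) (hne : nf R (X :: z) ≠ []) :
    ∃ κ, (X, ℓ, κ) ∈ Γ.rules ∧ nf R x' = nf R (κ ++ z) := by
  obtain ⟨ρ, hρ, hxρ⟩ := exists_eq_nf_append R x
  obtain ⟨σ, hσ, hzσ⟩ := exists_eq_nf_append R (X :: z)
  obtain ⟨Y, t, ht⟩ := List.exists_cons_of_ne_nil hne
  obtain ⟨X', κ, β, hrule, rfl, rfl⟩ := h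
  rw [hx, ht, List.cons_append, List.cons.injEq] at hxρ
  rw [ht, List.cons_append, List.cons.injEq] at hzσ
  obtain ⟨rfl, rfl⟩ := hxρ
  obtain ⟨rfl, rfl⟩ := hzσ
  refine ⟨κ, hrule, ?_⟩
  rw [← List.append_assoc, ← List.append_assoc, nf_append_of_forall_mem R hρ,
    nf_append_of_forall_mem R hσ]

theorem TauStar.append_right {u v : List C} (h : Γ.TauStar u v) (w : List C) :
    Γ.TauStar (u ++ w) (v ++ w) :=
  ReflTransGen.lift (· ++ w) (fun _ _ hs => hs.append_right w) _ _ h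

theorem tauStar_append_nil_iff {u v : List C} :
    Γ.TauStar (u ++ v) [] ↔ Γ.TauStar u [] ∧ Γ.TauStar v [] := by
  refine ⟨fun h => ?_, fun ⟨hu, hv⟩ => (by simpa using hu.append_right v : Γ.TauStar _ v).trans hv⟩
  suffices ∀ w, Γ.TauStar w [] → ∀ u v, w = u ++ v → Γ.TauStar u [] ∧ Γ.TauStar v [] from
    this _ h u v rfl
  intro w hw
  induction hw using ReflTransGen.head_induction_on with
  | refl =>
      intro u v huv
      obtain ⟨rfl, rfl⟩ := List.append_eq_nil_iff.1 huv.symm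
      exact ⟨.refl, .refl⟩
  | head hstep hrest ih =>
      rintro (_ | ⟨X, u⟩) v rfl
      · exact ⟨.refl, .head hstep hrest⟩
      · obtain ⟨Y, κ, β, hr, hw, rfl⟩ := hstep
        rw [List.cons_append, List.cons.injEq] at hw
        obtain ⟨rfl, rfl⟩ := hw
        obtain ⟨hκu, hv⟩ := ih (κ ++ u) v (List.append_assoc ..).symm
        exact ⟨.head ⟨_, κ, u, hr, rfl, rfl⟩ hκu, hv⟩

theorem eq_nil_of_tauStar_nil {v : List C} (h : Γ.TauStar [] v) : v = [] := by
  induction h with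
  | refl => rfl
  | tail _ hs ih => subst ih; exact absurd hs not_step_nil

theorem tauStarR_of_tauStar {u v : List C} (h : Γ.TauStar u v) :
    Γ.TauStarR R (nf R u) (nf R v) :=
  ReflTransGen.lift (nf R) (fun a b hs => ⟨a, b, rfl, rfl, hs⟩) _ _ h

theorem nf_eq_of_tauStarR {x y : List C} (h : Γ.TauStarR R (nf R x) y) : nf R y = y := by
  induction h with
  | refl => exact nf_nf R x
  | tail _ hs => obtain ⟨_, b, -, rfl, -⟩ := hs; exact nf_nf R b

section Ground

variable (hR : R ⊆ Γ.GroundC)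
include hR

theorem tauStar_nil_of_forall_mem {ρ : List C} (hρ : ∀ X ∈ ρ, X ∈ R) : Γ.TauStar ρ [] := by
  induction ρ with
  | nil => exact .refl
  | cons X ρ ih =>
      rw [← List.singleton_append, tauStar_append_nil_iff]
      exact ⟨hR (hρ X List.mem_cons_self), ih fun Y hY => hρ Y (List.mem_cons_of_mem X hY)⟩

theorem tauStar_nil_iff_nf {α : List C} : Γ.TauStar α [] ↔ Γ.TauStar (nf R α) [] := by
  obtain ⟨ρ, hρ, hα⟩ := exists_eq_nf_append R α
  conv_lhs => rw [hα, tauStar_append_nil_iff]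
  exact and_iff_left (tauStar_nil_of_forall_mem hR hρ)

theorem tauStar_nil_of_tauStarR {u v : List C} (h : Γ.TauStarR R u v)
    (hv : Γ.TauStar v []) : Γ.TauStar u [] := by
  induction h using ReflTransGen.head_induction_on with
  | refl => exact hv
  | head hs _ ih =>
      obtain ⟨a, b, rfl, rfl, hab⟩ := hs
      exact (tauStar_nil_iff_nf hR).1 (.head hab ((tauStar_nil_iff_nf hR).2 ih))

end Ground

theorem RelChain.reflTransGen {s r : List C → List C → Prop} {anchor x y : List C}
    (h : RelChain s r anchor x y) : ReflTransGen s x y :=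
  ReflTransGen.mono (fun _ _ hs => hs.1) _ _ h

theorem RelChain.rel_anchor {s r : List C → List C → Prop} {anchor x y : List C}
    (h : RelChain s r anchor x y) (hx : r anchor x) : r anchor y := by
  induction h with
  | refl => exact hx
  | tail _ hs => exact hs.2

theorem normedProc_of_normed (hΓ : Γ.Normed) (w : List C) : Γ.NormedProc w := by
  induction w with
  | nil => exact .refl
  | cons X w ih =>
      refine .trans ?_ ih
      exact ReflTransGen.lift (· ++ w) (fun _ _ ⟨ℓ, hs⟩ => ⟨ℓ, hs.append_right w⟩) _ _ (hΓ X)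

variable (Γ) in
theorem isBranchingBisim_eq : Γ.IsBranchingBisim Eq := by
  refine ⟨eq_equivalence, ?_⟩
  rintro α _ rfl
  exact ⟨fun a _ α' h => ⟨α, α', .refl, h, rfl⟩, fun α' h hne => ⟨α, α', .refl, h, hne, rfl⟩⟩

variable (Γ) in
theorem bisim_refl (α : List C) : Γ.Bisim α α := ⟨Eq, isBranchingBisim_eq Γ, rfl⟩

section Branching

variable {b : List C → List C → Prop} (hb : Γ.IsBranchingBisim b)
include hb

theorem IsBranchingBisim.transfer {ℓ : A} {p p' q : List C} (hpq : b p q)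
    (h : Γ.Step ℓ p p') :
    ∃ q'', Γ.TauStar q q'' ∧ b p q'' ∧
      ((∃ q', Γ.Step ℓ q'' q' ∧ b p' q') ∨ (ℓ = Γ.tau ∧ b p' q'')) := by
  have hq : ∀ {q''}, RelChain (Γ.Step Γ.tau) b q q q'' → b p q'' := fun hc =>
    hb.1.trans hpq (hc.rel_anchor (hb.1.refl q))
  by_cases hℓ : ℓ = Γ.tau
  · subst hℓ
    by_cases hinert : b p p'
    · exact ⟨q, .refl, hpq, .inr ⟨rfl, hb.1.trans (hb.1.symm hinert) hpq⟩⟩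
    · obtain ⟨q'', q', hc, hs, -, hq'⟩ := (hb.2 p q hpq).2 p' h hinert
      exact ⟨q'', hc.reflTransGen, hq hc, .inl ⟨q', hs, hq'⟩⟩
  · obtain ⟨q'', q', hc, hs, hq'⟩ := (hb.2 p q hpq).1 ℓ hℓ p' h
    exact ⟨q'', hc.reflTransGen, hq hc, .inl ⟨q', hs, hq'⟩⟩

/-- `ε` cannot move, so a partner of `ε` can only perform inert silent steps, and normedness
makes them lead to `ε`. -/
theorem IsBranchingBisim.tauStar_nil_of_nil (hΓ : Γ.Normed) {q : List C} (h : b [] q) :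
    Γ.TauStar q [] := by
  induction normedProc_of_normed hΓ q using ReflTransGen.head_induction_on with
  | refl => exact .refl
  | head hs _ ih =>
      obtain ⟨ℓ, hs⟩ := hs
      obtain ⟨q'', hq'', -, hans⟩ := hb.transfer (hb.1.symm h) hs
      obtain rfl := eq_nil_of_tauStar_nil hq''
      rcases hans with ⟨q', hs', -⟩ | ⟨rfl, h'⟩
      · exact absurd hs' not_step_nil
      · exact .head hs (ih (hb.1.symm h'))

theorem IsBranchingBisim.tauStar_nil (hΓ : Γ.Normed) {p q : List C} (hpq : b p q)
    (hp : Γ.TauStar p []) : Γ.TauStar q [] := by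
  induction hp using ReflTransGen.head_induction_on generalizing q with
  | refl => exact hb.tauStar_nil_of_nil hΓ hpq
  | head hs _ ih =>
      obtain ⟨q'', hq'', -, hans⟩ := hb.transfer hpq hs
      rcases hans with ⟨q', hs', hq'⟩ | ⟨-, hq'⟩
      · exact hq''.trans (.head hs' (ih hq'))
      · exact hq''.trans (ih hq')

end Branching

/-- `y` matches the step `x —ℓ→ x'` of its `r`-partner `x`. -/
def Matches (Γ : BPA C A) (R : Set C) (r : List C → List C → Prop) (x y : List C) (ℓ : A)
    (x' : List C) : Prop :=
  ∃ y'', Γ.TauStarR R (nf R y) y'' ∧ r x y'' ∧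
    ((∃ y', Γ.StepR R ℓ y'' y' ∧ r x' y') ∨ (ℓ = Γ.tau ∧ r x' y''))

theorem Matches.mono {r r' : List C → List C → Prop} (hrr' : ∀ a c, r a c → r' a c)
    {x y x' : List C} {ℓ : A} (h : Γ.Matches R r x y ℓ x') : Γ.Matches R r' x y ℓ x' := by
  obtain ⟨y'', hc, hxy, hans⟩ := h
  exact ⟨y'', hc, hrr' _ _ hxy,
    hans.imp (fun ⟨y', hs, h'⟩ => ⟨y', hs, hrr' _ _ h'⟩) (And.imp_right (hrr' _ _))⟩

/-- A relaxation of `R`-bisimulation that is closed under unions and relational composition: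
it need not be an equivalence and the silent paths in `Matches` need not stay related, but it
must be invariant under `R`-normal forms. -/
structure IsSemiRBisim (Γ : BPA C A) (R : Set C) (r : List C → List C → Prop) : Prop where
  symm {x y : List C} : r x y → r y x
  nf_congr {x x' y y' : List C} : nf R x = nf R x' → nf R y = nf R y' → r x y → r x' y'
  ground {x y : List C} : r x y → Γ.TauStar x [] → Γ.TauStar y []
  transfer {x y x' : List C} {ℓ : A} : r x y → Γ.Step ℓ x x' → Γ.Matches R r x y ℓ x'

namespace IsSemiRBisim

variable {r : List C → List C → Prop} (hr : Γ.IsSemiRBisim R r)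
include hr

theorem nf_left {x y : List C} (h : r x y) : r (nf R x) y :=
  hr.nf_congr (nf_nf R x).symm rfl h

theorem of_nf_left {x y : List C} (h : r (nf R x) y) : r x y :=
  hr.nf_congr (nf_nf R x) rfl h

theorem transfer_stepR {ξ ξ' Θ : List C} {ℓ : A} (h : r ξ Θ) (hs : Γ.StepR R ℓ ξ ξ') :
    Γ.Matches R r ξ Θ ℓ ξ' := by
  obtain ⟨a, b, rfl, rfl, hab⟩ := hs
  obtain ⟨y'', hc, hay, hans⟩ := hr.transfer (hr.of_nf_left h) hab
  exact ⟨y'', hc, hr.nf_left hay,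
    hans.imp (fun ⟨y', hs, h'⟩ => ⟨y', hs, hr.nf_left h'⟩) (And.imp_right hr.nf_left)⟩

theorem exists_tauStarR {x y ξ : List C} (h : r x y) (hc : Γ.TauStarR R (nf R x) ξ) :
    ∃ Θ, Γ.TauStarR R (nf R y) Θ ∧ r ξ Θ := by
  induction hc with
  | refl => exact ⟨nf R y, .refl, hr.nf_congr (nf_nf R x).symm (nf_nf R y).symm h⟩
  | tail _ hs ih =>
      obtain ⟨Θ, hΘ, hξΘ⟩ := ih
      obtain ⟨y'', hc, -, hans⟩ := hr.transfer_stepR hξΘ hs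
      rw [nf_eq_of_tauStarR hΘ] at hc
      rcases hans with ⟨y', hs', hy'⟩ | ⟨-, hy''⟩
      · exact ⟨y', (hΘ.trans hc).tail hs', hy'⟩
      · exact ⟨y'', hΘ.trans hc, hy''⟩

theorem comp : Γ.IsSemiRBisim R (Relation.Comp r r) where
  symm := fun ⟨m, hxm, hmz⟩ => ⟨m, hr.symm hmz, hr.symm hxm⟩
  nf_congr hx hz := fun ⟨m, hxm, hmz⟩ => ⟨m, hr.nf_congr hx rfl hxm, hr.nf_congr rfl hz hmz⟩
  ground := fun ⟨_, hxm, hmz⟩ hx => hr.ground hmz (hr.ground hxm hx)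
  transfer := by
    rintro x z x' ℓ ⟨m, hxm, hmz⟩ hs
    obtain ⟨m'', hcm, hxm'', hans⟩ := hr.transfer hxm hs
    obtain ⟨Θ, hcΘ, hm''Θ⟩ := hr.exists_tauStarR hmz hcm
    rcases hans with ⟨m', hsm, hx'm'⟩ | ⟨hℓ, hx'm''⟩
    · obtain ⟨z'', hcz, hm''z'', hans⟩ := hr.transfer_stepR hm''Θ hsm
      rw [nf_eq_of_tauStarR hcΘ] at hcz
      refine ⟨z'', hcΘ.trans hcz, ⟨m'', hxm'', hm''z''⟩, ?_⟩
      exact hans.imp (fun ⟨z', hsz, hm'z'⟩ => ⟨z', hsz, m', hx'm', hm'z'⟩)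
        (And.imp_right fun h => ⟨m', hx'm', h⟩)
    · exact ⟨Θ, hcΘ, ⟨m'', hxm'', hm''Θ⟩, .inr ⟨hℓ, m'', hx'm'', hm''Θ⟩⟩

end IsSemiRBisim

theorem isSemiRBisim_nf_eq (hR : R ⊆ Γ.GroundC) :
    Γ.IsSemiRBisim R fun x y => nf R x = nf R y where
  symm h := h.symm
  nf_congr hx hy h := hx.symm.trans (h.trans hy)
  ground h hx := (tauStar_nil_iff_nf hR).2 (h ▸ (tauStar_nil_iff_nf hR).1 hx)
  transfer {x y x'} _ h hs := ⟨nf R y, .refl, h.trans (nf_nf R y).symm,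
    .inl ⟨nf R x', ⟨x, x', h.symm, rfl, hs⟩, (nf_nf R x').symm⟩⟩

section RBisim

variable {s : List C → List C → Prop} (hs : Γ.IsRBisim R s)
include hs

theorem IsRBisim.of_nf_eq {x y : List C} (h : nf R x = nf R y) : s x y :=
  hs.2.1 x y ((REq_iff_nf_eq R).2 h)

theorem IsRBisim.isSemiRBisim : Γ.IsSemiRBisim R s where
  symm h := hs.1.symm h
  nf_congr hx hy h := hs.1.trans (hs.of_nf_eq hx.symm) (hs.1.trans h (hs.of_nf_eq hy))
  ground h := (hs.2.2 _ _ h).1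
  transfer := by
    intro x y x' ℓ h hst
    have hy : ∀ {y''}, RelChain (Γ.StepR R Γ.tau) s y (nf R y) y'' → s x y'' := fun hc =>
      hs.1.trans h (hc.rel_anchor (hs.of_nf_eq (nf_nf R y).symm))
    by_cases hℓ : ℓ = Γ.tau
    · subst hℓ
      by_cases hinert : s x x'
      · exact ⟨nf R y, .refl, hy .refl, .inr ⟨rfl, hs.1.trans (hs.1.symm hinert) (hy .refl)⟩⟩
      · obtain ⟨y'', y', hc, hs', -, hy'⟩ := (hs.2.2 x y h).2.1 x' hst hinert
        exact ⟨y'', hc.reflTransGen, hy hc, .inl ⟨y', hs', hy'⟩⟩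
    · obtain ⟨y'', y', hc, hs', hy'⟩ := (hs.2.2 x y h).2.2 ℓ hℓ x' hst
      exact ⟨y'', hc.reflTransGen, hy hc, .inl ⟨y', hs', hy'⟩⟩

end RBisim

def SemiRBisim (Γ : BPA C A) (R : Set C) (x y : List C) : Prop :=
  ∃ r, Γ.IsSemiRBisim R r ∧ r x y

variable (Γ R) in
theorem isSemiRBisim_semiRBisim : Γ.IsSemiRBisim R (Γ.SemiRBisim R) where
  symm := fun ⟨r, hr, h⟩ => ⟨r, hr, hr.symm h⟩
  nf_congr hx hy := fun ⟨r, hr, h⟩ => ⟨r, hr, hr.nf_congr hx hy h⟩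
  ground := fun ⟨_, hr, h⟩ => hr.ground h
  transfer := fun ⟨r, hr, h⟩ hs => (hr.transfer h hs).mono fun _ _ h' => ⟨r, hr, h'⟩

section SemiRBisim

variable (hR : R ⊆ Γ.GroundC)
include hR

theorem semiRBisim_equivalence : Equivalence (Γ.SemiRBisim R) where
  refl _ := ⟨_, isSemiRBisim_nf_eq hR, rfl⟩
  symm := (isSemiRBisim_semiRBisim Γ R).symm
  trans h₁ h₂ := ⟨_, (isSemiRBisim_semiRBisim Γ R).comp, _, h₁, h₂⟩

/-- The stuttering property. -/
theorem semiRBisim_of_tauStarR {β ξ z : List C} (hβξ : Γ.SemiRBisim R β ξ)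
    (h₁ : Γ.TauStarR R (nf R β) z) (h₂ : Γ.TauStarR R z ξ) : Γ.SemiRBisim R β z := by
  have S := isSemiRBisim_semiRBisim Γ R
  let OnPath : List C → Prop := fun n => Γ.TauStarR R (nf R β) n ∧ Γ.TauStarR R n ξ
  let r : List C → List C → Prop := fun a c =>
    Γ.SemiRBisim R a c ∨ (OnPath (nf R a) ∧ OnPath (nf R c))
  have hξ : nf R ξ = ξ := nf_eq_of_tauStarR (h₁.trans h₂)
  have hr : Γ.IsSemiRBisim R r := by
    refine ⟨fun h => h.imp S.symm And.symm, fun hx hy h => ?_, fun h hg => ?_, fun h hs => ?_⟩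
    · exact h.imp (S.nf_congr hx hy) fun ⟨ha, hc⟩ => ⟨hx ▸ ha, hy ▸ hc⟩
    · rcases h with h | ⟨ha, hc⟩
      · exact S.ground h hg
      · have hβ := tauStar_nil_of_tauStarR hR ha.1 ((tauStar_nil_iff_nf hR).1 hg)
        have hξg := S.ground hβξ ((tauStar_nil_iff_nf hR).2 hβ)
        exact (tauStar_nil_iff_nf hR).2 (tauStar_nil_of_tauStarR hR hc.2 hξg)
    · rcases h with h | ⟨ha, hc⟩
      · exact (S.transfer h hs).mono fun _ _ => .inl
      · obtain ⟨Θ, hΘ, haΘ⟩ := S.exists_tauStarR hβξ ha.1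
        obtain ⟨y'', hcy, hay, hans⟩ := S.transfer (S.of_nf_left haΘ) hs
        rw [hξ] at hΘ
        rw [nf_eq_of_tauStarR (hξ ▸ hΘ)] at hcy
        exact ⟨y'', hc.2.trans (hΘ.trans hcy), .inl hay,
          hans.imp (fun ⟨y', hs', h'⟩ => ⟨y', hs', .inl h'⟩) (And.imp_right .inl)⟩
  have hz : nf R z = z := nf_eq_of_tauStarR h₁
  exact ⟨r, hr, .inr ⟨⟨.refl, h₁.trans h₂⟩, by rw [hz]; exact ⟨h₁, h₂⟩⟩⟩

theorem relChain_semiRBisim {β ξ : List C} (hc : Γ.TauStarR R (nf R β) ξ)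
    (h : Γ.SemiRBisim R β ξ) : RelChain (Γ.StepR R Γ.tau) (Γ.SemiRBisim R) β (nf R β) ξ := by
  suffices ∀ z, Γ.TauStarR R (nf R β) z → Γ.TauStarR R z ξ →
      RelChain (Γ.StepR R Γ.tau) (Γ.SemiRBisim R) β (nf R β) z from this ξ hc .refl
  intro z h₁ h₂
  induction h₁ with
  | refl => exact .refl
  | tail h₁ hs ih =>
      exact (ih (.head hs h₂)).tail ⟨hs, semiRBisim_of_tauStarR hR h (h₁.tail hs) h₂⟩

theorem isRBisim_semiRBisim : Γ.IsRBisim R (Γ.SemiRBisim R) := by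
  have S := isSemiRBisim_semiRBisim Γ R
  have E := semiRBisim_equivalence hR
  refine ⟨E, fun α β h => ⟨_, isSemiRBisim_nf_eq hR, (REq_iff_nf_eq R).1 h⟩,
    fun α β hαβ => ⟨S.ground hαβ, fun α' hs hvis => ?_, fun a ha α' hs => ?_⟩⟩
  · obtain ⟨y'', hc, hαy, hans⟩ := S.transfer hαβ hs
    rcases hans with ⟨y', hs', hy'⟩ | ⟨-, hy''⟩
    · refine ⟨y'', y', relChain_semiRBisim hR hc (E.trans (E.symm hαβ) hαy), hs',
        fun h => hvis ?_, hy'⟩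
      exact E.trans hαy (E.trans h (E.symm hy'))
    · exact absurd (E.trans hαy (E.symm hy'')) hvis
  · obtain ⟨y'', hc, hαy, hans⟩ := S.transfer hαβ hs
    obtain ⟨y', hs', hy'⟩ := hans.resolve_right fun h => ha h.1
    exact ⟨y'', y', relChain_semiRBisim hR hc (E.trans (E.symm hαβ) hαy), hs', hy'⟩

end SemiRBisim

def AppendRel (R : Set C) (b s : List C → List C → Prop) (x y : List C) : Prop :=
  ∃ p q u v, nf R x = nf R (p ++ u) ∧ nf R y = nf R (q ++ v) ∧ b p q ∧ s u v

section AppendRel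

variable {b s : List C → List C → Prop} (hΓ : Γ.Normed) (hR : R ⊆ Γ.GroundC)
  (hb : Γ.IsBranchingBisim b) (hs : Γ.IsSemiRBisim R s)

include hΓ hb hs in
/-- The step is one of `u`: `q v` lets `q` run down silently, then `v` answers. -/
theorem AppendRel.matches_of_inert {x y x' p q u v : List C} {ℓ : A}
    (hx : nf R x = nf R (p ++ u)) (hy : nf R y = nf R (q ++ v)) (hpq : b p q) (huv : s u v)
    (hp : Γ.TauStar p []) (hpu : nf R (p ++ u) = nf R u) (hst : Γ.Step ℓ x x') :
    Γ.Matches R (AppendRel R b s) x y ℓ x' := by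
  have of_s : ∀ {a c}, s a c → AppendRel R b s a c := fun h =>
    ⟨[], [], _, _, rfl, rfl, hb.1.refl [], h⟩
  have hqv : Γ.TauStarR R (nf R y) (nf R v) := by
    rw [hy]
    exact tauStarR_of_tauStar (by simpa using (hb.tauStar_nil hΓ hpq hp).append_right v)
  obtain ⟨v'', hc, hxv'', hans⟩ := hs.transfer (hs.nf_congr (hx.trans hpu).symm rfl huv) hst
  exact ⟨v'', hqv.trans hc, of_s hxv'',
    hans.imp (fun ⟨v', hs', h⟩ => ⟨v', hs', of_s h⟩) (And.imp_right of_s)⟩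

include hb in
/-- The step is one of the head `X`, hence of the prefix `X :: p₂`, and `b` answers it in
front of `v`. -/
theorem AppendRel.matches_of_live {x y x' p₂ q u v : List C} {X : C} {ℓ : A}
    (hx : nf R x = nf R (X :: p₂ ++ u)) (hy : nf R y = nf R (q ++ v)) (hpq : b (X :: p₂) q)
    (huv : s u v) (hne : nf R (X :: p₂ ++ u) ≠ []) (hst : Γ.Step ℓ x x') :
    Γ.Matches R (AppendRel R b s) x y ℓ x' := by
  obtain ⟨κ, hrule, hx'⟩ := hst.exists_rule_of_nf_eq (z := p₂ ++ u) hx hne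
  have hx' : nf R x' = nf R (κ ++ p₂ ++ u) := by rw [hx', List.append_assoc]
  obtain ⟨q'', hcq, hpq'', hans⟩ := hb.transfer hpq ⟨X, κ, p₂, hrule, rfl, rfl⟩
  refine ⟨nf R (q'' ++ v), hy ▸ tauStarR_of_tauStar (hcq.append_right v),
    ⟨X :: p₂, q'', u, v, hx, nf_nf R _, hpq'', huv⟩, ?_⟩
  rcases hans with ⟨q', hs', hq'⟩ | ⟨hℓ, hq'⟩
  · exact .inl ⟨nf R (q' ++ v), ⟨_, _, rfl, rfl, hs'.append_right v⟩,
      κ ++ p₂, q', u, v, hx', nf_nf R _, hq', huv⟩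
  · exact .inr ⟨hℓ, κ ++ p₂, q'', u, v, hx', nf_nf R _, hq', huv⟩

include hΓ hR hb hs in
theorem isSemiRBisim_appendRel : Γ.IsSemiRBisim R (AppendRel R b s) where
  symm := fun ⟨p, q, u, v, hx, hy, hpq, huv⟩ => ⟨q, p, v, u, hy, hx, hb.1.symm hpq, hs.symm huv⟩
  nf_congr hx hy := fun ⟨p, q, u, v, hx', hy', hpq, huv⟩ =>
    ⟨p, q, u, v, hx.symm.trans hx', hy.symm.trans hy', hpq, huv⟩
  ground := by
    rintro x y ⟨p, q, u, v, hx, hy, hpq, huv⟩ hxg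
    rw [tauStar_nil_iff_nf hR, hx, ← tauStar_nil_iff_nf hR, tauStar_append_nil_iff] at hxg
    rw [tauStar_nil_iff_nf hR, hy, ← tauStar_nil_iff_nf hR, tauStar_append_nil_iff]
    exact ⟨hb.tauStar_nil hΓ hpq hxg.1, hs.ground huv hxg.2⟩
  transfer := by
    rintro x y x' ℓ ⟨p, q, u, v, hx, hy, hpq, huv⟩ hst
    rcases p with _ | ⟨X, p₂⟩
    · exact AppendRel.matches_of_inert hΓ hb hs hx hy hpq huv .refl rfl hst
    by_cases hdead : nf R (X :: p₂ ++ u) = []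
    · have hall := (nf_eq_nil_iff R).1 hdead
      have hp := tauStar_nil_of_forall_mem hR fun Y hY => hall Y (List.mem_append_left u hY)
      have hu := (nf_eq_nil_iff R).2 fun Y hY => hall Y (List.mem_append_right _ hY)
      exact AppendRel.matches_of_inert hΓ hb hs hx hy hpq huv hp (hdead.trans hu.symm) hst
    · exact AppendRel.matches_of_live hb hx hy hpq huv hdead hst

end AppendRel

end BPA

/-- If `γ ≃_R δ` and `α ≃ β` then `αγ ≃_R βδ`; in particular
`γ ≃_R δ` implies `αγ ≃_R αδ` for every `α`. -/
theorem RBisim_congruence {C A : Type} (Γ : BPA C A) (hΓ : Γ.Normed)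
    (R : Set C) (hR : R ⊆ Γ.GroundC) (γ δ : List C) (h : Γ.RBisim R γ δ) :
    (∀ α β, Γ.Bisim α β → Γ.RBisim R (α ++ γ) (β ++ δ)) ∧
    (∀ α, Γ.RBisim R (α ++ γ) (α ++ δ)) := by
  obtain ⟨s, hs, hγδ⟩ := h
  have hcongr : ∀ α β, Γ.Bisim α β → Γ.RBisim R (α ++ γ) (β ++ δ) := by
    rintro α β ⟨b, hb, hαβ⟩
    have happ := BPA.isSemiRBisim_appendRel hΓ hR hb hs.isSemiRBisim
    exact ⟨Γ.SemiRBisim R, BPA.isRBisim_semiRBisim hR,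
      _, happ, α, β, γ, δ, rfl, rfl, hαβ, hγδ⟩
  exact ⟨hcongr, fun α => hcongr α α (Γ.bisim_refl α)⟩
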